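/- arXiv:1603.01651 — 10 statements merged into one kernel-verified Lean document; each statement's English description precedes it below -/
import Mathlib

section
/- For positive reals M and N (symmetric setting M1=M2=M, N1=N2=N), the maximum of d11+d12+d21+d22 over nonnegative reals satisfying d11+d12+d21 ≤ max(M,N), d11+d12+d22 ≤ max(M,N), d21+d22+d11 ≤ max(M,N), d21+d22+d12 ≤ max(M,N), d11+d12 ≤ N, d21+d22 ≤ N, d11+d21 ≤ M, d12+d22 ≤ M equals: 2M if M/N ≤ 2/3; 4N/3 if 2/3 < M/N ≤ 1; 4M/3 if 1 < M/N ≤ 3/2; and 2N if M/N > 3/2. -/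
/-- Sum-DoF of the symmetric (M,M,N,N) MIMO X channel. -/
theorem symmetric_X_channel_sum_dof (M N : ℝ) (hM : 0 < M) (hN : 0 < N) :
    IsGreatest
      {s : ℝ | ∃ d11 d21 d12 d22 : ℝ,
        0 ≤ d11 ∧ 0 ≤ d21 ∧ 0 ≤ d12 ∧ 0 ≤ d22 ∧
        d11 + d12 + d21 ≤ max M N ∧
        d11 + d12 + d22 ≤ max M N ∧
        d21 + d22 + d11 ≤ max M N ∧
        d21 + d22 + d12 ≤ max M N ∧
        d11 + d12 ≤ N ∧ d21 + d22 ≤ N ∧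
        d11 + d21 ≤ M ∧ d12 + d22 ≤ M ∧
        s = d11 + d12 + d21 + d22}
      (if M / N ≤ 2 / 3 then 2 * M
       else if M / N ≤ 1 then 4 * N / 3
       else if M / N ≤ 3 / 2 then 4 * M / 3
       else 2 * N) := by
  have hmaxM : M ≤ max M N := le_max_left M N
  have hmaxN : N ≤ max M N := le_max_right M N
  split_ifs with h1 h2 h3
  · rw [div_le_iff₀ hN] at h1
    constructor
    · exact ⟨M/2, M/2, M/2, M/2, by linarith, by linarith, by linarith, by linarith,
        by linarith, by linarith, by linarith, by linarith,
        by linarith, by linarith, by linarith, by linarith, by ring⟩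
    · rintro s ⟨a, b, c, d, ha, hb, hc, hd, _, _, _, _, _, _, p1, p2, rfl⟩
      linarith
  · rw [div_le_iff₀ hN] at h2
    push_neg at h1; rw [lt_div_iff₀ hN] at h1
    have hMN : max M N = N := max_eq_right (by linarith)
    constructor
    · exact ⟨N/3, N/3, N/3, N/3, by linarith, by linarith, by linarith, by linarith,
        by rw [hMN]; linarith, by rw [hMN]; linarith, by rw [hMN]; linarith,
        by rw [hMN]; linarith, by linarith, by linarith, by linarith, by linarith, by ring⟩
    · rintro s ⟨a, b, c, d, ha, hb, hc, hd, t1, t2, t3, t4, _, _, _, _, rfl⟩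
      rw [hMN] at t1 t2 t3 t4
      linarith
  · rw [div_le_iff₀ hN] at h3
    push_neg at h2; rw [lt_div_iff₀ hN] at h2
    have hMN : max M N = M := max_eq_left (by linarith)
    constructor
    · exact ⟨M/3, M/3, M/3, M/3, by linarith, by linarith, by linarith, by linarith,
        by rw [hMN]; linarith, by rw [hMN]; linarith, by rw [hMN]; linarith,
        by rw [hMN]; linarith, by linarith, by linarith, by linarith, by linarith, by ring⟩
    · rintro s ⟨a, b, c, d, ha, hb, hc, hd, t1, t2, t3, t4, _, _, _, _, rfl⟩
      rw [hMN] at t1 t2 t3 t4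
      linarith
  · push_neg at h3; rw [lt_div_iff₀ hN] at h3
    have hMN : max M N = M := max_eq_left (by linarith)
    constructor
    · exact ⟨N/2, N/2, N/2, N/2, by linarith, by linarith, by linarith, by linarith,
        by rw [hMN]; linarith, by rw [hMN]; linarith, by rw [hMN]; linarith,
        by rw [hMN]; linarith, by linarith, by linarith, by linarith, by linarith, by ring⟩
    · rintro s ⟨a, b, c, d, ha, hb, hc, hd, _, _, _, _, q1, q2, _, _, rfl⟩
      linarith
end

section
/- Suppose M1, M2, N1, N2 are positive integers with M1 + M2 = N1 + N2 = C and min(M1,M2,N1,N2) = 1, and assume M1 = 1 (so M2 = C−1, N1, N2 ≥ 1 with N1+N2 = C). Then the maximum of d11+d12+d21+d22 over the MIMO X-channel DoF region 𝔻_X equals C − 2/3, and this maximum is attained at the point d_ij = min(M_j, N_i) − 2/3 for i,j ∈ {1,2}. -/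
/-- The MIMO X channel DoF region membership predicate. -/
def memDX (M1 M2 N1 N2 : ℕ) (d11 d21 d12 d22 : ℝ) : Prop :=
  0 ≤ d11 ∧ 0 ≤ d21 ∧ 0 ≤ d12 ∧ 0 ≤ d22 ∧
  d11 + d12 + d21 ≤ max (M1 : ℝ) N1 ∧
  d11 + d12 + d22 ≤ max (M2 : ℝ) N1 ∧
  d21 + d22 + d11 ≤ max (M1 : ℝ) N2 ∧
  d21 + d22 + d12 ≤ max (M2 : ℝ) N2 ∧
  d11 + d12 ≤ (N1 : ℝ) ∧ d21 + d22 ≤ (N2 : ℝ) ∧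
  d11 + d21 ≤ (M1 : ℝ) ∧ d12 + d22 ≤ (M2 : ℝ)

/-- When M1 = 1 and M1+M2 = N1+N2 = C, the max sum-DoF of the MIMO X channel is
C - 2/3, attained at d_ij = min(M_j, N_i) - 2/3. -/
theorem X_channel_maxsum_ACS_case (M1 M2 N1 N2 C : ℕ)
    (hM1 : 0 < M1) (hM2 : 0 < M2) (hN1 : 0 < N1) (hN2 : 0 < N2)
    (hC1 : M1 + M2 = C) (hC2 : N1 + N2 = C)
    (hmin : min (min M1 M2) (min N1 N2) = 1) (hM1one : M1 = 1) :
    IsGreatest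
      {s : ℝ | ∃ d11 d21 d12 d22 : ℝ, memDX M1 M2 N1 N2 d11 d21 d12 d22 ∧
        s = d11 + d12 + d21 + d22} ((C : ℝ) - 2 / 3) ∧
    (memDX M1 M2 N1 N2 ((min (M1 : ℝ) N1) - 2 / 3) ((min (M1 : ℝ) N2) - 2 / 3)
        ((min (M2 : ℝ) N1) - 2 / 3) ((min (M2 : ℝ) N2) - 2 / 3) ∧
      ((min (M1 : ℝ) N1) - 2 / 3) + ((min (M2 : ℝ) N1) - 2 / 3)
        + ((min (M1 : ℝ) N2) - 2 / 3) + ((min (M2 : ℝ) N2) - 2 / 3)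
        = (C : ℝ) - 2 / 3) := by
  subst hM1one
  have hN1M2 : N1 ≤ M2 := by omega
  have hN2M2 : N2 ≤ M2 := by omega
  have r1 : (1 : ℝ) ≤ (N1 : ℝ) := by exact_mod_cast hN1
  have r2 : (1 : ℝ) ≤ (N2 : ℝ) := by exact_mod_cast hN2
  have r3 : (N1 : ℝ) ≤ (M2 : ℝ) := by exact_mod_cast hN1M2
  have r4 : (N2 : ℝ) ≤ (M2 : ℝ) := by exact_mod_cast hN2M2
  have rM2 : (M2 : ℝ) = (C : ℝ) - 1 := by
    have : (1 : ℝ) + (M2 : ℝ) = (C : ℝ) := by exact_mod_cast hC1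
    linarith
  have rC : (N1 : ℝ) + (N2 : ℝ) = (C : ℝ) := by exact_mod_cast hC2
  have m1 : min (1 : ℝ) (N1 : ℝ) = 1 := min_eq_left r1
  have m2 : min (1 : ℝ) (N2 : ℝ) = 1 := min_eq_left r2
  have m3 : min ((M2 : ℕ) : ℝ) (N1 : ℝ) = N1 := min_eq_right r3
  have m4 : min ((M2 : ℕ) : ℝ) (N2 : ℝ) = N2 := min_eq_right r4
  have x1 : max (1 : ℝ) (N1 : ℝ) = N1 := max_eq_right r1
  have x2 : max (1 : ℝ) (N2 : ℝ) = N2 := max_eq_right r2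
  have x3 : max ((M2 : ℕ) : ℝ) (N1 : ℝ) = M2 := max_eq_left r3
  have x4' : max ((M2 : ℕ) : ℝ) (N2 : ℝ) = M2 := max_eq_left r4
  simp only [memDX, Nat.cast_one]
  refine ⟨⟨⟨1/3, 1/3, (N1 : ℝ) - 2/3, (N2 : ℝ) - 2/3, ?_, by linarith⟩, ?_⟩, ?_, ?_⟩
  · exact ⟨by norm_num, by norm_num, by linarith, by linarith,
      by linarith [x1], by linarith [x3], by linarith [x2], by linarith [x4'],
      by linarith, by linarith, by norm_num, by linarith⟩
  · rintro s ⟨d11, d21, d12, d22, ⟨h0, h1, h2, h3, h4, h5, h6, h7, h8, h9, h10, h11⟩, rfl⟩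
    rw [x1] at h4; rw [x3] at h5; rw [x2] at h6; rw [x4'] at h7
    linarith
  · exact ⟨by linarith [m1], by linarith [m2], by linarith [m3], by linarith [m4],
      by linarith [m1, m2, m3, x1], by linarith [m1, x3], by linarith [m1, m2, m4, x2],
      by linarith [m2, x4'], by linarith [m1, m3], by linarith [m2, m4],
      by linarith [m1, m2], by linarith [m3, m4]⟩
  · linarith [m1, m2, m3, m4]
end

section
/- For positive integers M1, M2, N1, N2 with M1+M2 = N1+N2 = C and min(M1,M2,N1,N2)=1, every point (d11,d21,d12,d22) in the MIMO X channel DoF region 𝔻_X satisfies d11+d12+d21+d22 ≤ C − 2/3. -/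
/-- If M1+M2 = N1+N2 = C and min antenna count is 1, every point of the MIMO X
channel DoF region satisfies sum ≤ C - 2/3. -/
theorem X_channel_sum_bound (M1 M2 N1 N2 C : ℕ)
    (hM1 : 0 < M1) (hM2 : 0 < M2) (hN1 : 0 < N1) (hN2 : 0 < N2)
    (hC1 : M1 + M2 = C) (hC2 : N1 + N2 = C)
    (hmin : min (min M1 M2) (min N1 N2) = 1)
    (d11 d21 d12 d22 : ℝ)
    (h0 : 0 ≤ d11 ∧ 0 ≤ d21 ∧ 0 ≤ d12 ∧ 0 ≤ d22)
    (h1 : d11 + d12 + d21 ≤ max (M1 : ℝ) N1)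
    (h2 : d11 + d12 + d22 ≤ max (M2 : ℝ) N1)
    (h3 : d21 + d22 + d11 ≤ max (M1 : ℝ) N2)
    (h4 : d21 + d22 + d12 ≤ max (M2 : ℝ) N2)
    (h5 : d11 + d12 ≤ (N1 : ℝ)) (h6 : d21 + d22 ≤ (N2 : ℝ))
    (h7 : d11 + d21 ≤ (M1 : ℝ)) (h8 : d12 + d22 ≤ (M2 : ℝ)) :
    d11 + d12 + d21 + d22 ≤ (C : ℝ) - 2 / 3 := by
  have key : M1 = 1 ∨ M2 = 1 ∨ N1 = 1 ∨ N2 = 1 := by omega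
  have hm1 : (1:ℝ) ≤ M1 := by exact_mod_cast hM1
  have hm2 : (1:ℝ) ≤ M2 := by exact_mod_cast hM2
  have hn1 : (1:ℝ) ≤ N1 := by exact_mod_cast hN1
  have hn2 : (1:ℝ) ≤ N2 := by exact_mod_cast hN2
  have hc1 : (M1:ℝ) + M2 = C := by exact_mod_cast hC1
  have hc2 : (N1:ℝ) + N2 = C := by exact_mod_cast hC2
  rcases key with h | h | h | h
  · have hr : (M1:ℝ) = 1 := by rw [h]; norm_num
    have e1 : max (M1:ℝ) N1 ≤ N1 := max_le (by rw [hr]; exact hn1) le_rfl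
    have e3 : max (M1:ℝ) N2 ≤ N2 := max_le (by rw [hr]; exact hn2) le_rfl
    have e2 : max (M2:ℝ) N1 ≤ (C:ℝ) - 1 := max_le (by linarith) (by linarith)
    have e4 : max (M2:ℝ) N2 ≤ (C:ℝ) - 1 := max_le (by linarith) (by linarith)
    linarith
  · have hr : (M2:ℝ) = 1 := by rw [h]; norm_num
    have e2 : max (M2:ℝ) N1 ≤ N1 := max_le (by rw [hr]; exact hn1) le_rfl
    have e4 : max (M2:ℝ) N2 ≤ N2 := max_le (by rw [hr]; exact hn2) le_rfl
    have e1 : max (M1:ℝ) N1 ≤ (C:ℝ) - 1 := max_le (by linarith) (by linarith)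
    have e3 : max (M1:ℝ) N2 ≤ (C:ℝ) - 1 := max_le (by linarith) (by linarith)
    linarith
  · have hr : (N1:ℝ) = 1 := by rw [h]; norm_num
    have e1 : max (M1:ℝ) N1 ≤ M1 := max_le le_rfl (by rw [hr]; exact hm1)
    have e2 : max (M2:ℝ) N1 ≤ M2 := max_le le_rfl (by rw [hr]; exact hm2)
    have e3 : max (M1:ℝ) N2 ≤ (C:ℝ) - 1 := max_le (by linarith) (by linarith)
    have e4 : max (M2:ℝ) N2 ≤ (C:ℝ) - 1 := max_le (by linarith) (by linarith)
    linarith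
  · have hr : (N2:ℝ) = 1 := by rw [h]; norm_num
    have e3 : max (M1:ℝ) N2 ≤ M1 := max_le le_rfl (by rw [hr]; exact hm1)
    have e4 : max (M2:ℝ) N2 ≤ M2 := max_le le_rfl (by rw [hr]; exact hm2)
    have e1 : max (M1:ℝ) N1 ≤ (C:ℝ) - 1 := max_le (by linarith) (by linarith)
    have e2 : max (M2:ℝ) N1 ≤ (C:ℝ) - 1 := max_le (by linarith) (by linarith)
    linarith
end

section
/- For positive reals M and N, the maximum of d01+d21+d12+d22 over the symmetric cognitive MIMO X channel DoF region (with M1=M2=M, N1=N2=N) equals: 2M if M/N ≤ 3/4; 3N/2 if 3/4 < M/N ≤ 1; M + N/2 if 1 < M/N ≤ 3/2; and 2N if M/N > 3/2. -/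
/-- Sum-DoF of the symmetric cognitive MIMO X channel. -/
theorem symmetric_cognitive_X_sum_dof (M N : ℝ) (hM : 0 < M) (hN : 0 < N) :
    IsGreatest
      {s : ℝ | ∃ d01 d21 d12 d22 : ℝ,
        0 ≤ d01 ∧ 0 ≤ d21 ∧ 0 ≤ d12 ∧ 0 ≤ d22 ∧
        d01 + d12 + d21 ≤ max M N ∧
        d01 + d12 + d22 ≤ max M N ∧
        d21 + d22 + d12 ≤ max M N ∧
        d01 + d12 ≤ N ∧ d21 + d22 ≤ N ∧
        d21 ≤ M ∧ d12 + d22 ≤ M ∧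
        d01 + d21 + d12 + d22 ≤ 2 * M ∧
        s = d01 + d21 + d12 + d22}
      (if M / N ≤ 3 / 4 then 2 * M
       else if M / N ≤ 1 then 3 * N / 2
       else if M / N ≤ 3 / 2 then M + N / 2
       else 2 * N) := by
  have h34 : M / N ≤ 3 / 4 ↔ 4 * M ≤ 3 * N := by
    rw [div_le_div_iff₀ hN (by norm_num : (0:ℝ) < 4)]; constructor <;> intro h <;> linarith
  have h1 : M / N ≤ 1 ↔ M ≤ N := by rw [div_le_one hN]
  have h32 : M / N ≤ 3 / 2 ↔ 2 * M ≤ 3 * N := by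
    rw [div_le_div_iff₀ hN (by norm_num : (0:ℝ) < 2)]; constructor <;> intro h <;> linarith
  constructor
  · -- membership
    split_ifs with c1 c2 c3
    · rw [h34] at c1
      have hmax : N ≤ max M N := le_max_right M N
      exact ⟨2*M/3, 2*M/3, 0, 2*M/3, by linarith, by linarith, le_refl 0, by linarith,
        by linarith, by linarith, by linarith, by linarith, by linarith, by linarith,
        by linarith, by linarith, by ring⟩
    · rw [h34] at c1; rw [h1] at c2
      have hmax : N ≤ max M N := le_max_right M N
      exact ⟨N/2, N/2, 0, N/2, by linarith, by linarith, le_refl 0, by linarith,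
        by linarith, by linarith, by linarith, by linarith, by linarith, by linarith,
        by linarith, by linarith, by ring⟩
    · rw [h1] at c2; rw [h32] at c3
      have hmax : M ≤ max M N := le_max_left M N
      exact ⟨N/2, N/2, M - N, N/2, by linarith, by linarith, by linarith, by linarith,
        by linarith, by linarith, by linarith, by linarith, by linarith, by linarith,
        by linarith, by linarith, by ring⟩
    · rw [h1] at c2; rw [h32] at c3
      have hmax : M ≤ max M N := le_max_left M N
      exact ⟨N/2, N/2, N/2, N/2, by linarith, by linarith, by linarith, by linarith,
        by linarith, by linarith, by linarith, by linarith, by linarith, by linarith,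
        by linarith, by linarith, by ring⟩
  · rintro s ⟨d01, d21, d12, d22, h01, h21, h12, h22, hA, hB, hC, hD, hE, hF, hG, hH, rfl⟩
    split_ifs with c1 c2 c3
    · exact hH
    · rw [h1] at c2
      have hmax : max M N = N := max_eq_right c2
      rw [hmax] at hA hB hC
      linarith
    · rw [h1] at c2; push_neg at c2
      have hmax : max M N = M := max_eq_left c2.le
      rw [hmax] at hA hB hC
      linarith
    · linarith
end

section
/- For positive integers M1, M2, N1, N2 with M1+M2 = N1+N2 = C and min(M1,M2,N1,N2)=1, every point in the cognitive MIMO X channel DoF region 𝔻_co-X satisfies d01+d21+d12+d22 ≤ C − 1/2, and the point (d01,d21,d12,d22) = (min(M1+M2,N1) − 1/2, min(M1,N2) − 1/2, 0, min(M2,N2) − 1/2) lies in 𝔻_co-X and attains this bound. -/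
/-- Membership in the cognitive MIMO X channel DoF region 𝔻_co-X. -/
def memDcoX (M1 M2 N1 N2 : ℕ) (d01 d21 d12 d22 : ℝ) : Prop :=
  0 ≤ d01 ∧ 0 ≤ d21 ∧ 0 ≤ d12 ∧ 0 ≤ d22 ∧
  d01 + d12 + d21 ≤ max (M1 : ℝ) N1 ∧
  d01 + d12 + d22 ≤ max (M2 : ℝ) N1 ∧
  d21 + d22 + d12 ≤ max (M2 : ℝ) N2 ∧
  d01 + d12 ≤ (N1 : ℝ) ∧ d21 + d22 ≤ (N2 : ℝ) ∧
  d21 ≤ (M1 : ℝ) ∧ d12 + d22 ≤ (M2 : ℝ) ∧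
  d01 + d21 + d12 + d22 ≤ (M1 : ℝ) + M2

set_option maxHeartbeats 2000000 in
/-- When M1+M2 = N1+N2 = C and the minimum antenna number is 1, the sum-DoF of
the cognitive MIMO X channel is at most C - 1/2, attained by the stated point. -/
theorem cognitive_X_maxsum_ACS_case (M1 M2 N1 N2 C : ℕ)
    (hM1 : 0 < M1) (hM2 : 0 < M2) (hN1 : 0 < N1) (hN2 : 0 < N2)
    (hC1 : M1 + M2 = C) (hC2 : N1 + N2 = C)
    (hmin : min (min M1 M2) (min N1 N2) = 1) :
    (∀ d01 d21 d12 d22 : ℝ, memDcoX M1 M2 N1 N2 d01 d21 d12 d22 →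
      d01 + d21 + d12 + d22 ≤ (C : ℝ) - 1 / 2) ∧
    memDcoX M1 M2 N1 N2 ((min ((M1 : ℝ) + M2) N1) - 1 / 2)
      ((min (M1 : ℝ) N2) - 1 / 2) 0 ((min (M2 : ℝ) N2) - 1 / 2) ∧
    ((min ((M1 : ℝ) + M2) N1) - 1 / 2) + ((min (M1 : ℝ) N2) - 1 / 2) + 0
      + ((min (M2 : ℝ) N2) - 1 / 2) = (C : ℝ) - 1 / 2 := by
  have key : M1 = 1 ∨ M2 = 1 ∨ N1 = 1 ∨ N2 = 1 := by omega
  have c1 : (M1:ℝ) + M2 = C := by exact_mod_cast hC1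
  have c2 : (N1:ℝ) + N2 = C := by exact_mod_cast hC2
  have m1 : (1:ℝ) ≤ M1 := by exact_mod_cast hM1
  have m2 : (1:ℝ) ≤ M2 := by exact_mod_cast hM2
  have n1 : (1:ℝ) ≤ N1 := by exact_mod_cast hN1
  have n2 : (1:ℝ) ≤ N2 := by exact_mod_cast hN2
  have keyR : (M1:ℝ) = 1 ∨ (M2:ℝ) = 1 ∨ (N1:ℝ) = 1 ∨ (N2:ℝ) = 1 := by
    rcases key with k|k|k|k
    · exact Or.inl (by exact_mod_cast k)
    · exact Or.inr (Or.inl (by exact_mod_cast k))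
    · exact Or.inr (Or.inr (Or.inl (by exact_mod_cast k)))
    · exact Or.inr (Or.inr (Or.inr (by exact_mod_cast k)))
  have hminN1 : min ((M1:ℝ)+M2) N1 = (N1:ℝ) := min_eq_right (by linarith)
  set s1 : ℝ := min (M1:ℝ) N2 with hs1
  set s2 : ℝ := min (M2:ℝ) N2 with hs2
  have s1l : s1 ≤ M1 := min_le_left _ _
  have s1r : s1 ≤ N2 := min_le_right _ _
  have s2l : s2 ≤ M2 := min_le_left _ _
  have s2r : s2 ≤ N2 := min_le_right _ _
  have s1g : (1:ℝ) ≤ s1 := le_min m1 n2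
  have s2g : (1:ℝ) ≤ s2 := le_min m2 n2
  have hsum : s1 + s2 = (N2:ℝ) + 1 := by
    rcases min_cases (M1:ℝ) (N2:ℝ) with ⟨f1,g1⟩|⟨f1,g1⟩ <;>
    rcases min_cases (M2:ℝ) (N2:ℝ) with ⟨f2,g2⟩|⟨f2,g2⟩ <;>
      rw [hs1, hs2, f1, f2] <;> rcases keyR with k|k|k|k <;> linarith
  have hx1 : (N1:ℝ) + s1 - 1 ≤ max (M1:ℝ) N1 := by
    have := le_max_left (M1:ℝ) (N1:ℝ)
    have := le_max_right (M1:ℝ) (N1:ℝ)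
    rcases min_cases (M1:ℝ) (N2:ℝ) with ⟨f1,g1⟩|⟨f1,g1⟩ <;>
      rw [hs1, f1] <;> rcases keyR with k|k|k|k <;> linarith
  have hx2 : (N1:ℝ) + s2 - 1 ≤ max (M2:ℝ) N1 := by
    have := le_max_left (M2:ℝ) (N1:ℝ)
    have := le_max_right (M2:ℝ) (N1:ℝ)
    rcases min_cases (M2:ℝ) (N2:ℝ) with ⟨f2,g2⟩|⟨f2,g2⟩ <;>
      rw [hs2, f2] <;> rcases keyR with k|k|k|k <;> linarith
  have hx3 : (N2:ℝ) ≤ max (M2:ℝ) N2 := le_max_right _ _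
  refine ⟨?_, ?_, ?_⟩
  · intro d01 d21 d12 d22 h
    obtain ⟨p0,p1,p2,p3,hA,hB,hCc,hD,hE,hF,hG,hH⟩ := h
    rcases max_cases (M1:ℝ) (N1:ℝ) with ⟨e1,l1⟩|⟨e1,l1⟩ <;>
    rcases max_cases (M2:ℝ) (N1:ℝ) with ⟨e2,l2⟩|⟨e2,l2⟩ <;>
    rcases max_cases (M2:ℝ) (N2:ℝ) with ⟨e3,l3⟩|⟨e3,l3⟩ <;>
      rw [e1] at hA <;> rw [e2] at hB <;> rw [e3] at hCc <;>
      rcases keyR with k|k|k|k <;> linarith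
  · rw [hminN1]
    exact ⟨by linarith, by linarith, le_refl 0, by linarith, by linarith,
      by linarith, by linarith, by linarith, by linarith, by linarith,
      by linarith, by linarith⟩
  · rw [hminN1]; linarith
end

section
/- Let M1, M2, N1, N2 be positive integers and let 𝔻 ⊆ ℝ≥0⁹ be the nine-message DoF region defined by the nine inequalities (out1)–(out9). Let 𝔻_eq ⊆ ℝ≥0⁹ be the set of nine-tuples d for which there exist nonnegative reals Z11, Z12, Z21, Z22, A1, A2, Z01, Z02 satisfying the auxiliary constraints (aux1)–(aux12) and the five achievability inequalities (ach1)–(ach5). Then 𝔻 = 𝔻_eq. -/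
/-- Helper: max identity. -/
lemma max_eq_add_max_sub (x y : ℝ) : max x y = y + max (x - y) 0 := by
  rcases le_total x y with h | h
  · rw [max_eq_right h, max_eq_right (by linarith)]; ring
  · rw [max_eq_left h, max_eq_left (by linarith)]; ring

/-- Helper block lemma: greedy construction of the auxiliary variables for one
receiver. -/
lemma aux_block (N a b c dA dB dC s : ℝ)
    (ha : 0 ≤ a) (hb : 0 ≤ b) (hc : 0 ≤ c)
    (hA : 0 ≤ dA) (hB : 0 ≤ dB) (hC : 0 ≤ dC)
    (o1 : s + dA ≤ N + a) (o2 : s + dB ≤ N + b) (o5 : s ≤ N)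
    (o9 : s + dA + dB + dC - N ≤ c) :
    ∃ ZA ZB A1 ZC : ℝ, 0 ≤ ZA ∧ 0 ≤ ZB ∧ 0 ≤ A1 ∧ 0 ≤ ZC ∧
      ZA + ZB + A1 + ZC ≤ c ∧ ZA ≤ a ∧ ZB ≤ b ∧
      ZA + A1 ≤ dA ∧ ZB + A1 ≤ dB ∧ ZC ≤ dC ∧
      s + dA + dB + dC - ZA - ZB - A1 - ZC ≤ N := by
  set t := max (s + dA + dB + dC - N) 0 with ht
  have ht0 : 0 ≤ t := le_max_right _ 0
  have hts : s + dA + dB + dC - N ≤ t := le_max_left _ _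
  have htc : t ≤ c := max_le o9 hc
  set ZA := min t (min a dA) with hZA
  have hZA0 : 0 ≤ ZA := le_min ht0 (le_min ha hA)
  have hZAt : ZA ≤ t := min_le_left _ _
  have hZAa : ZA ≤ a := le_trans (min_le_right _ _) (min_le_left _ _)
  have hZAd : ZA ≤ dA := le_trans (min_le_right _ _) (min_le_right _ _)
  set ZB := min (t - ZA) (min b dB) with hZB
  have hZB0 : 0 ≤ ZB := le_min (by linarith) (le_min hb hB)
  have hZBt : ZB ≤ t - ZA := min_le_left _ _
  have hZBb : ZB ≤ b := le_trans (min_le_right _ _) (min_le_left _ _)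
  have hZBd : ZB ≤ dB := le_trans (min_le_right _ _) (min_le_right _ _)
  set A1 := min (t - ZA - ZB) (min (dA - ZA) (dB - ZB)) with hA1
  have hA10 : 0 ≤ A1 := le_min (by linarith) (le_min (by linarith) (by linarith))
  have hA1t : A1 ≤ t - ZA - ZB := min_le_left _ _
  have hA1A : A1 ≤ dA - ZA := le_trans (min_le_right _ _) (min_le_left _ _)
  have hA1B : A1 ≤ dB - ZB := le_trans (min_le_right _ _) (min_le_right _ _)
  set ZC := min (t - ZA - ZB - A1) dC with hZC
  have hZC0 : 0 ≤ ZC := le_min (by linarith) hC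
  have hZCt : ZC ≤ t - ZA - ZB - A1 := min_le_left _ _
  have hZCd : ZC ≤ dC := min_le_right _ _
  have key : s + dA + dB + dC - N ≤ ZA + ZB + A1 + ZC := by
    rcases le_or_gt (t - ZA - ZB - A1) dC with h | h
    · have : ZC = t - ZA - ZB - A1 := min_eq_left h
      linarith
    · have hZCeq : ZC = dC := min_eq_right h.le
      have hA1pos : A1 < t - ZA - ZB := by linarith
      have hA1eq : A1 = min (dA - ZA) (dB - ZB) := by
        rcases min_cases (t - ZA - ZB) (min (dA - ZA) (dB - ZB)) with ⟨h1, _⟩ | ⟨h1, _⟩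
        · rw [hA1] at hA1pos; linarith [hA1pos.ne (by rw [h1])]
        · rw [hA1, h1]
      have hZBpos : ZB < t - ZA := by linarith
      have hZBeq : ZB = min b dB := by
        rcases min_cases (t - ZA) (min b dB) with ⟨h1, _⟩ | ⟨h1, _⟩
        · exfalso; rw [hZB] at hZBpos; rw [h1] at hZBpos; linarith
        · rw [hZB, h1]
      have hZApos : ZA < t := by linarith
      have hZAeq : ZA = min a dA := by
        rcases min_cases t (min a dA) with ⟨h1, _⟩ | ⟨h1, _⟩
        · exfalso; rw [hZA] at hZApos; rw [h1] at hZApos; linarith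
        · rw [hZA, h1]
      rcases min_cases a dA with ⟨e1, f1⟩ | ⟨e1, f1⟩ <;>
      rcases min_cases b dB with ⟨e2, f2⟩ | ⟨e2, f2⟩ <;>
      rcases min_cases (dA - ZA) (dB - ZB) with ⟨e3, f3⟩ | ⟨e3, f3⟩ <;>
      rw [e1] at hZAeq <;> rw [e2] at hZBeq <;> rw [e3] at hA1eq <;>
      linarith
  exact ⟨ZA, ZB, A1, ZC, hZA0, hZB0, hA10, hZC0, by linarith, hZAa, hZBb,
    by linarith, by linarith, hZCd, by linarith⟩

/-- Equivalence of the nine-message DoF outer-bound region 𝔻 and the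
achievable region 𝔻_eq (with the eight auxiliary zero-forcing/alignment
variables eliminated): 𝔻 = 𝔻_eq. -/
theorem nine_message_D_eq_Deq (M1 M2 N1 N2 : ℕ)
    (hM1 : 0 < M1) (hM2 : 0 < M2) (hN1 : 0 < N1) (hN2 : 0 < N2)
    (d11 d21 d12 d22 d1 d2 d01 d02 d0 : ℝ)
    (h11 : 0 ≤ d11) (h21 : 0 ≤ d21) (h12 : 0 ≤ d12) (h22 : 0 ≤ d22)
    (h1 : 0 ≤ d1) (h2 : 0 ≤ d2) (h01 : 0 ≤ d01) (h02 : 0 ≤ d02)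
    (h0 : 0 ≤ d0) :
    ((d1 + d2 + d0 + d01 + d11 + d12) + d21 ≤ max (M1 : ℝ) N1 ∧
     (d1 + d2 + d0 + d01 + d11 + d12) + d22 ≤ max (M2 : ℝ) N1 ∧
     (d1 + d2 + d0 + d02 + d21 + d22) + d11 ≤ max (M1 : ℝ) N2 ∧
     (d1 + d2 + d0 + d02 + d21 + d22) + d12 ≤ max (M2 : ℝ) N2 ∧
     d1 + d2 + d0 + d01 + d11 + d12 ≤ (N1 : ℝ) ∧
     d1 + d2 + d0 + d02 + d21 + d22 ≤ (N2 : ℝ) ∧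
     d1 + d11 + d21 ≤ (M1 : ℝ) ∧
     d2 + d12 + d22 ≤ (M2 : ℝ) ∧
     d1 + d2 + d0 + d01 + d02 + d11 + d21 + d12 + d22
       ≤ min ((M1 : ℝ) + M2) ((N1 : ℝ) + N2))
    ↔
    (∃ Z11 Z12 Z21 Z22 A1 A2 Z01 Z02 : ℝ,
      0 ≤ Z11 ∧ 0 ≤ Z12 ∧ 0 ≤ Z21 ∧ 0 ≤ Z22 ∧
      0 ≤ A1 ∧ 0 ≤ A2 ∧ 0 ≤ Z01 ∧ 0 ≤ Z02 ∧
      Z21 + Z22 + A1 + Z02 ≤ max ((M1 : ℝ) + M2 - N1) 0 ∧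
      Z21 ≤ max ((M1 : ℝ) - N1) 0 ∧
      Z22 ≤ max ((M2 : ℝ) - N1) 0 ∧
      Z21 + A1 ≤ d21 ∧
      Z22 + A1 ≤ d22 ∧
      Z02 ≤ d02 ∧
      Z11 + Z12 + A2 + Z01 ≤ max ((M1 : ℝ) + M2 - N2) 0 ∧
      Z11 ≤ max ((M1 : ℝ) - N2) 0 ∧
      Z12 ≤ max ((M2 : ℝ) - N2) 0 ∧
      Z11 + A2 ≤ d11 ∧
      Z12 + A2 ≤ d12 ∧
      Z01 ≤ d01 ∧
      (d1 + d2 + d0 + d01 + d11 + d12) + d21 + d22 + d02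
        - Z21 - Z22 - A1 - Z02 ≤ (N1 : ℝ) ∧
      (d1 + d2 + d0 + d02 + d21 + d22) + d11 + d12 + d01
        - Z11 - Z12 - A2 - Z01 ≤ (N2 : ℝ) ∧
      d1 + d11 + d21 ≤ (M1 : ℝ) ∧
      d2 + d12 + d22 ≤ (M2 : ℝ) ∧
      d1 + d2 + d0 + d01 + d02 + d11 + d21 + d12 + d22
        ≤ min ((M1 : ℝ) + M2) ((N1 : ℝ) + N2)) := by
  have e1 : max (M1 : ℝ) N1 = (N1 : ℝ) + max ((M1 : ℝ) - N1) 0 :=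
    max_eq_add_max_sub _ _
  have e2 : max (M2 : ℝ) N1 = (N1 : ℝ) + max ((M2 : ℝ) - N1) 0 :=
    max_eq_add_max_sub _ _
  have e3 : max (M1 : ℝ) N2 = (N2 : ℝ) + max ((M1 : ℝ) - N2) 0 :=
    max_eq_add_max_sub _ _
  have e4 : max (M2 : ℝ) N2 = (N2 : ℝ) + max ((M2 : ℝ) - N2) 0 :=
    max_eq_add_max_sub _ _
  constructor
  · rintro ⟨o1, o2, o3, o4, o5, o6, o7, o8, o9⟩
    have o9' : d1 + d2 + d0 + d01 + d02 + d11 + d21 + d12 + d22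
        ≤ (M1 : ℝ) + M2 := le_trans o9 (min_le_left _ _)
    obtain ⟨ZA, ZB, A1, ZC, p0, p1, p2, p3, p4, p5, p6, p7, p8, p9, p10⟩ :=
      aux_block (N1 : ℝ) (max ((M1 : ℝ) - N1) 0) (max ((M2 : ℝ) - N1) 0)
        (max ((M1 : ℝ) + M2 - N1) 0) d21 d22 d02
        (d1 + d2 + d0 + d01 + d11 + d12)
        (le_max_right _ _) (le_max_right _ _) (le_max_right _ _)
        h21 h22 h02 (by linarith) (by linarith) o5
        (by have := le_max_left ((M1 : ℝ) + M2 - N1) 0; linarith)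
    obtain ⟨ZA', ZB', A2, ZC', q0, q1, q2, q3, q4, q5, q6, q7, q8, q9, q10⟩ :=
      aux_block (N2 : ℝ) (max ((M1 : ℝ) - N2) 0) (max ((M2 : ℝ) - N2) 0)
        (max ((M1 : ℝ) + M2 - N2) 0) d11 d12 d01
        (d1 + d2 + d0 + d02 + d21 + d22)
        (le_max_right _ _) (le_max_right _ _) (le_max_right _ _)
        h11 h12 h01 (by linarith) (by linarith) o6
        (by have := le_max_left ((M1 : ℝ) + M2 - N2) 0; linarith)
    exact ⟨ZA', ZB', ZA, ZB, A1, A2, ZC', ZC, q0, q1, p0, p1, p2, q2, q3, p3,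
      p4, p5, p6, p7, p8, p9, q4, q5, q6, q7, q8, q9, by linarith, by linarith,
      o7, o8, o9⟩
  · rintro ⟨Z11, Z12, Z21, Z22, A1, A2, Z01, Z02, n11, n12, n21, n22, nA1, nA2,
      n01, n02, a1, a2, a3, a4, a5, a6, a7, a8, a9, a10, a11, a12, c1, c2, c3,
      c4, c5⟩
    refine ⟨by linarith, by linarith, by linarith, by linarith, by linarith,
      by linarith, c3, c4, c5⟩
end

section
/- Let M1, M2, N1, N2 be positive integers and d ∈ ℝ≥0⁹. If there exist nonnegative reals Z11,Z12,Z21,Z22,A1,A2,Z01,Z02 satisfying Z21 ≤ (M1−N1)⁺, Z22 ≤ (M2−N1)⁺, Z22+A1 ≤ d22, Z02 ≤ d02, Z21+A1 ≤ d21, and s1 + d21 + d22 + d02 − Z21 − Z22 − A1 − Z02 ≤ N1 (where s1 = d1+d2+d0+d01+d11+d12), then s1 + d21 ≤ max(M1,N1) and s1 ≤ N1. -/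
/-- Key step in 𝔻_eq ⊆ 𝔻: the auxiliary-variable achievability constraint at
receiver 1 implies the outer bounds s1 + d21 ≤ max(M1,N1) and s1 ≤ N1. -/
theorem Deq_subset_D_key_step (M1 M2 N1 N2 : ℕ)
    (hM1 : 0 < M1) (hM2 : 0 < M2) (hN1 : 0 < N1) (hN2 : 0 < N2)
    (d11 d21 d12 d22 d1 d2 d01 d02 d0 : ℝ)
    (h11 : 0 ≤ d11) (h21 : 0 ≤ d21) (h12 : 0 ≤ d12) (h22 : 0 ≤ d22)
    (h1 : 0 ≤ d1) (h2 : 0 ≤ d2) (h01 : 0 ≤ d01) (h02 : 0 ≤ d02)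
    (h0 : 0 ≤ d0)
    (Z11 Z12 Z21 Z22 A1 A2 Z01 Z02 : ℝ)
    (hZ11 : 0 ≤ Z11) (hZ12 : 0 ≤ Z12) (hZ21 : 0 ≤ Z21) (hZ22 : 0 ≤ Z22)
    (hA1 : 0 ≤ A1) (hA2 : 0 ≤ A2) (hZ01 : 0 ≤ Z01) (hZ02 : 0 ≤ Z02)
    (c1 : Z21 ≤ max ((M1 : ℝ) - N1) 0)
    (c2 : Z22 ≤ max ((M2 : ℝ) - N1) 0)
    (c3 : Z22 + A1 ≤ d22)
    (c4 : Z02 ≤ d02)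
    (c5 : Z21 + A1 ≤ d21)
    (c6 : (d1 + d2 + d0 + d01 + d11 + d12) + d21 + d22 + d02
        - Z21 - Z22 - A1 - Z02 ≤ (N1 : ℝ)) :
    (d1 + d2 + d0 + d01 + d11 + d12) + d21 ≤ max (M1 : ℝ) N1 ∧
    d1 + d2 + d0 + d01 + d11 + d12 ≤ (N1 : ℝ) := by
  constructor
  · rcases le_or_gt (N1:ℝ) M1 with h | h
    · rw [max_eq_left h] at *
      rw [max_eq_left (by linarith : (0:ℝ) ≤ (M1:ℝ)-N1)] at c1
      linarith
    · rw [max_eq_right h.le] at *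
      rw [max_eq_right (by linarith : (M1:ℝ)-N1 ≤ 0)] at c1
      linarith
  · linarith
end

section
/- Specializing the nine-message DoF region 𝔻 to the interference channel (only d11 and d22 nonzero, all other coordinates zero) yields exactly the region {(d11,d22) ∈ ℝ≥0² : d11 ≤ min(M1,N1), d22 ≤ min(M2,N2), d11+d22 ≤ min(max(M2,N1), max(M1,N2))}. That is, for nonnegative reals d11, d22, the point (d11,0,0,d22,0,0,0,0,0) lies in 𝔻 if and only if d11 ≤ min(M1,N1), d22 ≤ min(M2,N2), and d11+d22 ≤ min(max(M2,N1), max(M1,N2)). -/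
def memD9 (M1 M2 N1 N2 : ℕ) (d11 d21 d12 d22 d1 d2 d01 d02 d0 : ℝ) : Prop :=
  0 ≤ d11 ∧ 0 ≤ d21 ∧ 0 ≤ d12 ∧ 0 ≤ d22 ∧ 0 ≤ d1 ∧ 0 ≤ d2 ∧
  0 ≤ d01 ∧ 0 ≤ d02 ∧ 0 ≤ d0 ∧
  (d1 + d2 + d0 + d01 + d11 + d12) + d21 ≤ max (M1 : ℝ) N1 ∧
  (d1 + d2 + d0 + d01 + d11 + d12) + d22 ≤ max (M2 : ℝ) N1 ∧
  (d1 + d2 + d0 + d02 + d21 + d22) + d11 ≤ max (M1 : ℝ) N2 ∧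
  (d1 + d2 + d0 + d02 + d21 + d22) + d12 ≤ max (M2 : ℝ) N2 ∧
  d1 + d2 + d0 + d01 + d11 + d12 ≤ (N1 : ℝ) ∧
  d1 + d2 + d0 + d02 + d21 + d22 ≤ (N2 : ℝ) ∧
  d1 + d11 + d21 ≤ (M1 : ℝ) ∧
  d2 + d12 + d22 ≤ (M2 : ℝ) ∧
  d1 + d2 + d0 + d01 + d02 + d11 + d21 + d12 + d22
    ≤ min ((M1 : ℝ) + M2) ((N1 : ℝ) + N2)

/-- Specializing 𝔻 to the interference channel yields the known IC DoF region. -/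
theorem nine_message_specializes_to_IC (M1 M2 N1 N2 : ℕ)
    (hM1 : 0 < M1) (hM2 : 0 < M2) (hN1 : 0 < N1) (hN2 : 0 < N2)
    (d11 d22 : ℝ) (h11 : 0 ≤ d11) (h22 : 0 ≤ d22) :
    memD9 M1 M2 N1 N2 d11 0 0 d22 0 0 0 0 0 ↔
    (d11 ≤ min (M1 : ℝ) N1 ∧ d22 ≤ min (M2 : ℝ) N2 ∧
     d11 + d22 ≤ min (max (M2 : ℝ) N1) (max (M1 : ℝ) N2)) := by
  simp only [memD9, add_zero, zero_add, le_refl, true_and, le_min_iff, h11, h22]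
  constructor
  · rintro ⟨h1, h2, h3, h4, h5, h6, h7, h8, h9⟩
    exact ⟨⟨h7, h5⟩, ⟨h8, h6⟩, h2, by linarith⟩
  · rintro ⟨⟨a1, a2⟩, ⟨b1, b2⟩, c1, c2⟩
    refine ⟨le_trans a1 (le_max_left _ _), c1, by linarith,
      le_trans b1 (le_max_left _ _), a2, b2, a1, b1, ?_⟩
    exact ⟨by linarith, by linarith⟩
end

section
/- Specializing the nine-message DoF region 𝔻 to the cognitive interference channel (only d01 and d22 nonzero) yields exactly {(d01,d22) ∈ ℝ≥0² : d01 ≤ N1, d22 ≤ min(M2,N2), d01+d22 ≤ min(M1+M2, max(M2,N1))}. That is, (0,0,0,d22,0,0,d01,0,0) ∈ 𝔻 if and only if these three inequalities hold. -/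
/-- Specializing 𝔻 to the cognitive interference channel (only W01 and W22). -/
theorem nine_message_specializes_to_cognitive_IC (M1 M2 N1 N2 : ℕ)
    (hM1 : 0 < M1) (hM2 : 0 < M2) (hN1 : 0 < N1) (hN2 : 0 < N2)
    (d01 d22 : ℝ) (h01 : 0 ≤ d01) (h22 : 0 ≤ d22) :
    memD9 M1 M2 N1 N2 0 0 0 d22 0 0 d01 0 0 ↔
    (d01 ≤ (N1 : ℝ) ∧ d22 ≤ min (M2 : ℝ) N2 ∧
     d01 + d22 ≤ min ((M1 : ℝ) + M2) (max (M2 : ℝ) N1)) := by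
  have hA : (N1 : ℝ) ≤ max (M1 : ℝ) N1 := le_max_right _ _
  have hB : (N2 : ℝ) ≤ max (M1 : ℝ) N2 := le_max_right _ _
  have hC : (M2 : ℝ) ≤ max (M2 : ℝ) N2 := le_max_left _ _
  constructor
  · rintro ⟨-, -, -, -, -, -, -, -, -, h10, h11, h12, h13, h14, h15, h16, h17, h18⟩
    have h18a := le_trans h18 (min_le_left _ _)
    exact ⟨by linarith, le_min (by linarith) (by linarith),
      le_min (by linarith) (by linarith)⟩
  · rintro ⟨ha, hb, hc⟩
    have hb1 := le_trans hb (min_le_left _ _)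
    have hb2 := le_trans hb (min_le_right _ _)
    have hc1 := le_trans hc (min_le_left _ _)
    have hc2 := le_trans hc (min_le_right _ _)
    refine ⟨le_refl 0, le_refl 0, le_refl 0, h22, le_refl 0, le_refl 0, h01,
      le_refl 0, le_refl 0, by linarith, by linarith, by linarith, by linarith,
      by linarith, by linarith, by simp, by linarith,
      le_min (by linarith) (by linarith)⟩
end

section
/- In the symmetric case M1=M2=N1=N2=M with M a positive integer divisible by 3, the point (d11,d21,d12,d22) = (M/3, M/3, M/3, M/3) lies in 𝔻_X and attains the maximum sum 4M/3 of d11+d21+d12+d22 over 𝔻_X. -/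
/-- Membership in 𝔻_X for the symmetric case M1=M2=N1=N2=M. -/
def memDXsym (M : ℕ) (d11 d21 d12 d22 : ℝ) : Prop :=
  0 ≤ d11 ∧ 0 ≤ d21 ∧ 0 ≤ d12 ∧ 0 ≤ d22 ∧
  d11 + d12 + d21 ≤ (M : ℝ) ∧
  d11 + d12 + d22 ≤ (M : ℝ) ∧
  d21 + d22 + d11 ≤ (M : ℝ) ∧
  d21 + d22 + d12 ≤ (M : ℝ) ∧
  d11 + d12 ≤ (M : ℝ) ∧ d21 + d22 ≤ (M : ℝ) ∧
  d11 + d21 ≤ (M : ℝ) ∧ d12 + d22 ≤ (M : ℝ)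

/-- In the symmetric case M1=M2=N1=N2=M with 3 ∣ M, the point
(M/3, M/3, M/3, M/3) lies in 𝔻_X and attains the maximum sum 4M/3. -/
theorem symmetric_X_quarter_point (M : ℕ) (hM : 0 < M) (h3 : 3 ∣ M) :
    memDXsym M ((M : ℝ) / 3) ((M : ℝ) / 3) ((M : ℝ) / 3) ((M : ℝ) / 3) ∧
    (M : ℝ) / 3 + (M : ℝ) / 3 + (M : ℝ) / 3 + (M : ℝ) / 3 = 4 * M / 3 ∧
    IsGreatest
      {s : ℝ | ∃ d11 d21 d12 d22 : ℝ, memDXsym M d11 d21 d12 d22 ∧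
        s = d11 + d21 + d12 + d22}
      (4 * M / 3) := by

  have hM0 : (0:ℝ) ≤ (M:ℝ) := Nat.cast_nonneg M
  have hmem : memDXsym M ((M : ℝ) / 3) ((M : ℝ) / 3) ((M : ℝ) / 3) ((M : ℝ) / 3) := by
    refine ⟨by linarith, by linarith, by linarith, by linarith, ?_, ?_, ?_, ?_, ?_, ?_, ?_, ?_⟩ <;> linarith
  refine ⟨hmem, by ring, ⟨⟨(M:ℝ)/3, (M:ℝ)/3, (M:ℝ)/3, (M:ℝ)/3, hmem, by ring⟩, ?_⟩⟩
  rintro s ⟨d11, d21, d12, d22, ⟨h1, h2, h3', h4, h5, h6, h7, h8, _⟩, rfl⟩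
  linarith
end
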